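/- Let b > 0, ν ≥ 0 and R₀ > 0. The series 𝓘(b,ν;−iy;cos φ) = Γ(bν+1) Σ_{m=0}^∞ ((−iy)/2)^{bm} Ĩ_{b(m+ν)}(−iy) (m+ν) ν⁻¹ Cₘ^ν(cos φ) converges absolutely, and there is a constant C (depending on b, ν, R₀) such that |𝓘(b,ν;−iy;cos φ)| ≤ C for all y ∈ ℝ with |y| ≤ R₀ and all φ ∈ [0,π]. -/

import Mathlib

/-- The Gegenbauer polynomial `Cₘ^ν(t)`, via the Rodrigues-type formula. -/
noncomputable def gegenbauer (ν : ℝ) (m : ℕ) (t : ℝ) : ℝ :=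
  ((-2 : ℝ) ^ m / m.factorial) *
    (Real.Gamma (m + ν) * Real.Gamma (m + 2 * ν) /
      (Real.Gamma ν * Real.Gamma (2 * m + 2 * ν))) *
    (1 - t ^ 2) ^ (-ν + 1 / 2) *
    iteratedDeriv m (fun s : ℝ => (1 - s ^ 2) ^ ((m : ℝ) + ν - 1 / 2)) t

/-- `(m+ν)ν⁻¹ Cₘ^ν(cos φ)`, with the limit interpretation for `ν = 0`. -/
noncomputable def gegFactor (ν : ℝ) (m : ℕ) (φ : ℝ) : ℝ :=
  if ν = 0 then (if m = 0 then 1 else 2 * Real.cos (m * φ))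
  else ((m : ℝ) + ν) * ν⁻¹ * gegenbauer ν m (Real.cos φ)

/-- The normalized `I`-Bessel function `Ĩ_λ(w) = ∑_k (w²/4)^k / (k! Γ(k+λ+1))`. -/
noncomputable def normBesselI (l : ℝ) (w : ℂ) : ℂ :=
  ∑' k : ℕ, (w ^ 2 / 4) ^ k / ((k.factorial : ℂ) * (Real.Gamma (k + l + 1) : ℂ))

/-- The `m`-th term of the series defining `𝓘(b,ν;−iy;cos φ)`. -/
noncomputable def scrITerm (b ν y φ : ℝ) (m : ℕ) : ℂ :=
  ((-Complex.I * y) / 2) ^ (((b * m : ℝ)) : ℂ) *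
    normBesselI (b * (m + ν)) (-Complex.I * y) * (gegFactor ν m φ : ℝ)

/-- `𝓘(b,ν;−iy;cos φ) = Γ(bν+1) ∑_m ((−iy)/2)^{bm} Ĩ_{b(m+ν)}(−iy) (m+ν)ν⁻¹Cₘ^ν(cos φ)`. -/
noncomputable def scrI (b ν y φ : ℝ) : ℂ :=
  (Real.Gamma (b * ν + 1) : ℂ) * ∑' m : ℕ, scrITerm b ν y φ m

section ScrIProof

open Real Filter Set Finset

private lemma myGamma_add_nat (x : ℝ) (hx : 0 < x) (n : ℕ) :
    Real.Gamma (x + n) = Real.Gamma x * ∏ j ∈ Finset.range n, (x + j) := by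
  induction n with
  | zero => simp
  | succ n ih =>
    have h : x + ((n : ℕ) + 1 : ℕ) = (x + n) + 1 := by push_cast; ring
    rw [h, Real.Gamma_add_one (s := x + n) (by positivity : (0:ℝ) < x + n).ne', ih,
      Finset.prod_range_succ]
    ring

private lemma myfact_gamma_le (l : ℝ) (hl : 0 ≤ l) (k : ℕ) :
    (k.factorial : ℝ) * Real.Gamma (l + 1) ≤ Real.Gamma (k + l + 1) := by
  induction k with
  | zero => simp
  | succ k ih =>
    have h : ((k + 1 : ℕ) : ℝ) + l + 1 = ((k : ℝ) + l + 1) + 1 := by push_cast; ring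
    rw [h, Real.Gamma_add_one (s := (k:ℝ) + l + 1) (by positivity : (0:ℝ) < (k:ℝ)+l+1).ne']
    have h2 : ((k.factorial : ℝ)) * Real.Gamma (l + 1) * ((k : ℝ) + 1) ≤
        Real.Gamma ((k:ℝ) + l + 1) * ((k:ℝ) + l + 1) := by
      apply mul_le_mul ih (by linarith) (by positivity)
        (le_of_lt (Real.Gamma_pos_of_pos (by positivity)))
    calc ((k+1 : ℕ).factorial : ℝ) * Real.Gamma (l + 1)
        = (k.factorial : ℝ) * Real.Gamma (l+1) * ((k:ℝ)+1) := by
          push_cast [Nat.factorial_succ]; ring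
      _ ≤ Real.Gamma ((k:ℝ) + l + 1) * ((k:ℝ) + l + 1) := h2
      _ = ((k:ℝ) + l + 1) * Real.Gamma ((k:ℝ) + l + 1) := by ring

private lemma normBesselI_norm_le (l : ℝ) (hl : 0 ≤ l) (w : ℂ) :
    ‖normBesselI l w‖ ≤ Real.exp (‖w‖ ^ 2 / 4) / Real.Gamma (l + 1) := by
  have hΓl : 0 < Real.Gamma (l + 1) := Real.Gamma_pos_of_pos (by linarith)
  set x : ℝ := ‖w‖ ^ 2 / 4 with hx
  have hx0 : 0 ≤ x := by positivity
  have hnorm : ∀ k : ℕ, ‖(w ^ 2 / 4) ^ k / ((k.factorial : ℂ) * (Real.Gamma (k + l + 1) : ℂ))‖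
      = x ^ k / ((k.factorial : ℝ) * Real.Gamma (k + l + 1)) := by
    intro k
    have hΓ : 0 < Real.Gamma (k + l + 1) := Real.Gamma_pos_of_pos (by positivity)
    rw [norm_div, norm_pow, norm_div]
    have h1 : ‖w ^ 2‖ = ‖w‖ ^ 2 := norm_pow w 2
    have h2 : ‖(4 : ℂ)‖ = (4 : ℝ) := by norm_num
    have h3 : ‖(k.factorial : ℂ) * (Real.Gamma (k + l + 1) : ℂ)‖
        = (k.factorial : ℝ) * Real.Gamma (k + l + 1) := by
      rw [norm_mul, Complex.norm_natCast, Complex.norm_real, Real.norm_eq_abs,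
        abs_of_pos hΓ]
    rw [h1, h2, h3, hx]
  have hle : ∀ k : ℕ, x ^ k / ((k.factorial : ℝ) * Real.Gamma (k + l + 1))
      ≤ x ^ k / (k.factorial : ℝ) * (Real.Gamma (l + 1))⁻¹ := by
    intro k
    have hΓ : 0 < Real.Gamma (k + l + 1) := Real.Gamma_pos_of_pos (by positivity)
    have hf : (0:ℝ) < (k.factorial : ℝ) := by exact_mod_cast k.factorial_pos
    have hf1 : (1:ℝ) ≤ (k.factorial : ℝ) := by exact_mod_cast k.factorial_pos
    have key : Real.Gamma (l + 1) ≤ Real.Gamma (k + l + 1) := by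
      calc Real.Gamma (l + 1) = 1 * Real.Gamma (l + 1) := (one_mul _).symm
        _ ≤ (k.factorial : ℝ) * Real.Gamma (l + 1) := by
            apply mul_le_mul_of_nonneg_right hf1 hΓl.le
        _ ≤ Real.Gamma (k + l + 1) := myfact_gamma_le l hl k
    have h1 : x ^ k / ((k.factorial : ℝ) * Real.Gamma (k + l + 1))
        ≤ x ^ k / ((k.factorial : ℝ) * Real.Gamma (l + 1)) := by
      gcongr
    calc x ^ k / ((k.factorial : ℝ) * Real.Gamma (k + l + 1))
        ≤ x ^ k / ((k.factorial : ℝ) * Real.Gamma (l + 1)) := h1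
      _ = x ^ k / (k.factorial : ℝ) * (Real.Gamma (l + 1))⁻¹ := by ring
  have hsumh : Summable (fun k : ℕ => x ^ k / (k.factorial : ℝ) * (Real.Gamma (l + 1))⁻¹) :=
    (Real.summable_pow_div_factorial x).mul_right _
  have hsumg : Summable (fun k : ℕ => x ^ k / ((k.factorial : ℝ) * Real.Gamma (k + l + 1))) :=
    hsumh.of_nonneg_of_le (fun k => by positivity) hle
  have hsumnorm : Summable (fun k : ℕ =>
      ‖(w ^ 2 / 4) ^ k / ((k.factorial : ℂ) * (Real.Gamma (k + l + 1) : ℂ))‖) := by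
    simpa only [funext hnorm] using hsumg
  calc ‖normBesselI l w‖ ≤ ∑' k : ℕ,
        ‖(w ^ 2 / 4) ^ k / ((k.factorial : ℂ) * (Real.Gamma (k + l + 1) : ℂ))‖ :=
      norm_tsum_le_tsum_norm hsumnorm
    _ = ∑' k : ℕ, x ^ k / ((k.factorial : ℝ) * Real.Gamma (k + l + 1)) := by
        exact tsum_congr hnorm
    _ ≤ ∑' k : ℕ, x ^ k / (k.factorial : ℝ) * (Real.Gamma (l + 1))⁻¹ :=
        Summable.tsum_le_tsum hle hsumg hsumh
    _ = (∑' k : ℕ, x ^ k / (k.factorial : ℝ)) * (Real.Gamma (l + 1))⁻¹ := tsum_mul_right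
    _ = Real.exp x / Real.Gamma (l + 1) := by
        rw [Real.exp_eq_exp_ℝ, NormedSpace.exp_eq_tsum_div, div_eq_mul_inv]

private lemma iter_onePlus (c : ℝ) (k : ℕ) :
    ∀ t : ℝ, -1 < t → iteratedDeriv k (fun s : ℝ => (1 + s) ^ c) t
      = (∏ j ∈ Finset.range k, (c - j)) * (1 + t) ^ (c - k) := by
  induction k with
  | zero => intro t ht; simp
  | succ k ih =>
    intro t ht
    rw [iteratedDeriv_succ]
    have hev : iteratedDeriv k (fun s : ℝ => (1 + s) ^ c) =ᶠ[nhds t]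
        fun u : ℝ => (∏ j ∈ Finset.range k, (c - j)) * (1 + u) ^ (c - k) := by
      filter_upwards [Ioi_mem_nhds ht] with u hu using ih u hu
    rw [hev.deriv_eq]
    have h1 : HasDerivAt (fun u : ℝ => 1 + u) 1 t := by
      simpa using (hasDerivAt_id t).const_add 1
    have hd : HasDerivAt (fun u : ℝ => (1 + u) ^ (c - k))
        ((c - k) * (1 + t) ^ (c - k - 1) * 1) t := by
      exact (Real.hasDerivAt_rpow_const (x := 1 + t) (p := c - k)
        (Or.inl (by linarith))).comp t h1
    rw [(hd.const_mul _).deriv]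
    rw [Finset.prod_range_succ]
    have hc : c - (k + 1 : ℕ) = c - k - 1 := by push_cast; ring
    rw [hc]; ring

private lemma iter_oneSub (c : ℝ) (k : ℕ) :
    ∀ t : ℝ, t < 1 → iteratedDeriv k (fun s : ℝ => (1 - s) ^ c) t
      = (-1) ^ k * (∏ j ∈ Finset.range k, (c - j)) * (1 - t) ^ (c - k) := by
  induction k with
  | zero => intro t ht; simp
  | succ k ih =>
    intro t ht
    rw [iteratedDeriv_succ]
    have hev : iteratedDeriv k (fun s : ℝ => (1 - s) ^ c) =ᶠ[nhds t]
        fun u : ℝ => (-1) ^ k * (∏ j ∈ Finset.range k, (c - j)) * (1 - u) ^ (c - k) := by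
      filter_upwards [Iio_mem_nhds ht] with u hu using ih u hu
    rw [hev.deriv_eq]
    have h1 : HasDerivAt (fun u : ℝ => 1 - u) (-1) t := by
      simpa using (hasDerivAt_id t).const_sub 1
    have hd : HasDerivAt (fun u : ℝ => (1 - u) ^ (c - k))
        ((c - k) * (1 - t) ^ (c - k - 1) * (-1)) t := by
      exact (Real.hasDerivAt_rpow_const (x := 1 - t) (p := c - k)
        (Or.inl (by intro h; nlinarith))).comp t h1
    rw [(hd.const_mul _).deriv]
    rw [Finset.prod_range_succ]
    have hc : c - (k + 1 : ℕ) = c - k - 1 := by push_cast; ring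
    rw [hc]; ring

private lemma iter_pow (n k : ℕ) :
    iteratedDeriv k (fun s : ℝ => s ^ n)
      = fun t : ℝ => (∏ j ∈ Finset.range k, ((n : ℝ) - j)) * t ^ (n - k) := by
  induction k with
  | zero => simp
  | succ k ih =>
    rw [iteratedDeriv_succ, ih]
    funext t
    rcases lt_or_ge k n with hk | hk
    · have hd : HasDerivAt (fun t : ℝ => t ^ (n - k)) ((n - k : ℕ) * t ^ (n - k - 1)) t :=
        hasDerivAt_pow (n - k) t
      rw [(hd.const_mul _).deriv, Finset.prod_range_succ]
      have h1 : ((n - k : ℕ) : ℝ) = (n : ℝ) - k := by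
        push_cast [Nat.cast_sub hk.le]; ring
      have h2 : n - (k + 1) = n - k - 1 := by omega
      rw [h1, h2]; ring
    · have h0 : n - k = 0 := by omega
      have hconst : (fun t : ℝ => (∏ j ∈ Finset.range k, ((n : ℝ) - j)) * t ^ (n - k))
          = fun _ : ℝ => (∏ j ∈ Finset.range k, ((n : ℝ) - j)) := by
        funext u; rw [h0, pow_zero, mul_one]
      rw [hconst, deriv_const]
      have hz : ∏ j ∈ Finset.range (k + 1), ((n : ℝ) - j) = 0 :=
        Finset.prod_eq_zero (Finset.mem_range.mpr (by omega : n < k + 1)) (by simp)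
      rw [hz, zero_mul]

private lemma iter_onePlus_nat (n k : ℕ) (t : ℝ) :
    iteratedDeriv k (fun s : ℝ => (1 + s) ^ n) t
      = (∏ j ∈ Finset.range k, ((n : ℝ) - j)) * (1 + t) ^ (n - k) := by
  have h : (fun s : ℝ => (1 + s) ^ n) = fun z : ℝ => (fun u : ℝ => u ^ n) (1 + z) := rfl
  rw [h, iteratedDeriv_comp_const_add k (fun u : ℝ => u ^ n) 1, iter_pow]

private lemma iter_oneSub_nat (n k : ℕ) (t : ℝ) :
    iteratedDeriv k (fun s : ℝ => (1 - s) ^ n) t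
      = (-1) ^ k * ((∏ j ∈ Finset.range k, ((n : ℝ) - j)) * (1 - t) ^ (n - k)) := by
  have h : (fun s : ℝ => (1 - s) ^ n) = fun x : ℝ => (fun z : ℝ => (1 + z) ^ n) (-x) := by
    funext x; ring_nf
  rw [h, iteratedDeriv_comp_neg k (fun z : ℝ => (1 + z) ^ n) t, iter_onePlus_nat]
  have : (1 : ℝ) + -t = 1 - t := by ring
  rw [this, smul_eq_mul]

private lemma geg_core_interior (ν : ℝ) (hν : 0 < ν) (m : ℕ) (t : ℝ)
    (h1 : -1 < t) (h2 : t < 1) :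
    (1 - t ^ 2) ^ (-ν + 1 / 2 : ℝ) *
      |iteratedDeriv m (fun s : ℝ => (1 - s ^ 2) ^ ((m : ℝ) + ν - 1 / 2)) t|
    ≤ ((m : ℝ) + ν) ^ m * 4 ^ m := by
  have h1t : (0:ℝ) < 1 - t := by linarith
  have h2t : (0:ℝ) < 1 + t := by linarith
  have hmν : (0:ℝ) < (m:ℝ) + ν := by positivity
  set c : ℝ := (m : ℝ) + ν - 1/2 with hc
  set σ : ℝ := -ν + 1/2 with hσ
  set f₁ : ℝ → ℝ := fun s => (1 - s) ^ c with hf₁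
  set f₂ : ℝ → ℝ := fun s => (1 + s) ^ c with hf₂
  have htI : t ∈ Ioo (-1:ℝ) 1 := ⟨h1, h2⟩
  -- replace the function by the product on a neighborhood
  have hFeq : iteratedDeriv m (fun s : ℝ => (1 - s ^ 2) ^ c) t
      = iteratedDeriv m (fun s : ℝ => f₁ s * f₂ s) t := by
    apply Filter.EventuallyEq.iteratedDeriv_eq
    filter_upwards [isOpen_Ioo.mem_nhds htI] with u hu
    have hu1 : (0:ℝ) ≤ 1 - u := by linarith [hu.2]
    have hu2 : (0:ℝ) ≤ 1 + u := by linarith [hu.1]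
    simp only [hf₁, hf₂]
    rw [← Real.mul_rpow hu1 hu2]
    congr 1; ring
  -- smoothness of the factors on Ioo
  have hcd1 : ContDiffOn ℝ (⊤ : ℕ∞) f₁ (Ioo (-1:ℝ) 1) := by
    intro x hx
    exact (((contDiffAt_const (c := (1:ℝ))).sub contDiffAt_id).rpow_const_of_ne
      (by intro h; nlinarith [hx.2] : (1:ℝ) - x ≠ 0)).contDiffWithinAt
  have hcd2 : ContDiffOn ℝ (⊤ : ℕ∞) f₂ (Ioo (-1:ℝ) 1) := by
    intro x hx
    exact (((contDiffAt_const (c := (1:ℝ))).add contDiffAt_id).rpow_const_of_ne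
      (by intro h; nlinarith [hx.1] : (1:ℝ) + x ≠ 0)).contDiffWithinAt
  have hleib := norm_iteratedFDerivWithin_mul_le (𝕜 := ℝ) hcd1 hcd2
    isOpen_Ioo.uniqueDiffOn htI (n := m) (by exact_mod_cast (le_top : (m : ℕ∞) ≤ ⊤))
  -- identify the left-hand side
  have hL : ‖iteratedFDerivWithin ℝ m (fun y => f₁ y * f₂ y) (Ioo (-1:ℝ) 1) t‖
      = |iteratedDeriv m (fun s : ℝ => (1 - s ^ 2) ^ c) t| := by
    rw [iteratedFDerivWithin_of_isOpen (𝕜 := ℝ) m isOpen_Ioo htI,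
      norm_iteratedFDeriv_eq_norm_iteratedDeriv, Real.norm_eq_abs, hFeq]
  set P : ℕ → ℝ := fun k => ∏ j ∈ Finset.range k, (c - j) with hP
  have habs : ∀ i : ℕ, i ≤ m → |P i| ≤ ((m:ℝ) + ν) ^ i := by
    intro i him
    rw [hP, Finset.abs_prod]
    calc ∏ j ∈ Finset.range i, |c - (j:ℝ)|
        ≤ ∏ _j ∈ Finset.range i, ((m:ℝ) + ν) := by
          apply Finset.prod_le_prod (fun _ _ => abs_nonneg _)
          intro j hj
          have hj' : (j:ℝ) ≤ (m:ℝ) - 1 := by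
            have : j + 1 ≤ m := by
              have := Finset.mem_range.mp hj; omega
            have := (Nat.cast_le (α := ℝ)).mpr this
            push_cast at this; linarith
          rw [abs_of_nonneg (by rw [hc]; linarith)]
          rw [hc]; linarith
      _ = ((m:ℝ) + ν) ^ i := by rw [Finset.prod_const, Finset.card_range]
  have hW1 : ∀ i : ℕ, ‖iteratedFDerivWithin ℝ i f₁ (Ioo (-1:ℝ) 1) t‖
      = |P i| * (1 - t) ^ (c - (i:ℝ)) := by
    intro i
    rw [iteratedFDerivWithin_of_isOpen (𝕜 := ℝ) i isOpen_Ioo htI,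
      norm_iteratedFDeriv_eq_norm_iteratedDeriv, Real.norm_eq_abs, hf₁,
      iter_oneSub c i t h2, abs_mul, abs_mul, abs_pow, abs_neg, abs_one, one_pow, one_mul,
      abs_of_nonneg (Real.rpow_nonneg h1t.le _)]
  have hW2 : ∀ i : ℕ, ‖iteratedFDerivWithin ℝ i f₂ (Ioo (-1:ℝ) 1) t‖
      = |P i| * (1 + t) ^ (c - (i:ℝ)) := by
    intro i
    rw [iteratedFDerivWithin_of_isOpen (𝕜 := ℝ) i isOpen_Ioo htI,
      norm_iteratedFDeriv_eq_norm_iteratedDeriv, Real.norm_eq_abs, hf₂,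
      iter_onePlus c i t h1, abs_mul,
      abs_of_nonneg (Real.rpow_nonneg h2t.le _)]
  have hkey : (1 - t ^ 2) ^ σ * |iteratedDeriv m (fun s : ℝ => (1 - s ^ 2) ^ c) t|
      ≤ ∑ i ∈ Finset.range (m + 1),
        (m.choose i : ℝ) * (((m:ℝ) + ν) ^ m * ((1 - t) ^ (m - i) * (1 + t) ^ i)) := by
    rw [← hL]
    calc (1 - t ^ 2) ^ σ * ‖iteratedFDerivWithin ℝ m (fun y => f₁ y * f₂ y) (Ioo (-1:ℝ) 1) t‖
        ≤ (1 - t ^ 2) ^ σ * ∑ i ∈ Finset.range (m + 1),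
            (m.choose i : ℝ) * ‖iteratedFDerivWithin ℝ i f₁ (Ioo (-1:ℝ) 1) t‖ *
              ‖iteratedFDerivWithin ℝ (m - i) f₂ (Ioo (-1:ℝ) 1) t‖ := by
          exact mul_le_mul_of_nonneg_left hleib (Real.rpow_nonneg (by nlinarith) _)
      _ = ∑ i ∈ Finset.range (m + 1), (1 - t ^ 2) ^ σ *
            ((m.choose i : ℝ) * ‖iteratedFDerivWithin ℝ i f₁ (Ioo (-1:ℝ) 1) t‖ *
              ‖iteratedFDerivWithin ℝ (m - i) f₂ (Ioo (-1:ℝ) 1) t‖) := Finset.mul_sum _ _ _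
      _ ≤ _ := by
          apply Finset.sum_le_sum
          intro i hi
          have him : i ≤ m := by have := Finset.mem_range.mp hi; omega
          rw [hW1 i, hW2 (m - i)]
          have hrw : (1 - t^2) ^ σ * ((1 - t) ^ (c - (i:ℝ)) * (1 + t) ^ (c - ((m - i : ℕ):ℝ)))
              = (1 - t) ^ (m - i) * (1 + t) ^ i := by
            have e1 : (1 - t ^ 2 : ℝ) = (1 - t) * (1 + t) := by ring
            rw [e1, Real.mul_rpow h1t.le h2t.le]
            have e2 : (1 - t) ^ σ * (1 + t) ^ σ * ((1 - t) ^ (c - (i:ℝ)) * (1 + t) ^ (c - ((m - i : ℕ):ℝ)))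
                = ((1 - t) ^ σ * (1 - t) ^ (c - (i:ℝ))) * ((1 + t) ^ σ * (1 + t) ^ (c - ((m - i : ℕ):ℝ))) := by
              ring
            rw [e2, ← Real.rpow_add h1t, ← Real.rpow_add h2t]
            have hcast : ((m - i : ℕ) : ℝ) = (m : ℝ) - (i : ℝ) := by
              push_cast [Nat.cast_sub him]; ring
            have e3 : σ + (c - (i:ℝ)) = ((m - i : ℕ) : ℝ) := by
              rw [hcast, hσ, hc]; ring
            have e4 : σ + (c - ((m - i : ℕ):ℝ)) = ((i : ℕ) : ℝ) := by
              rw [hcast, hσ, hc]; ring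
            rw [e3, e4, Real.rpow_natCast, Real.rpow_natCast]
          have hPP : |P i| * |P (m - i)| ≤ ((m:ℝ) + ν) ^ m := by
            calc |P i| * |P (m - i)|
                ≤ ((m:ℝ) + ν) ^ i * ((m:ℝ) + ν) ^ (m - i) :=
                  mul_le_mul (habs i him) (habs (m - i) (by omega)) (abs_nonneg _)
                    (pow_nonneg hmν.le _)
              _ = ((m:ℝ) + ν) ^ m := by rw [← pow_add]; congr 1; omega
          have e5 : (1 - t ^ 2) ^ σ * ((m.choose i : ℝ) * (|P i| * (1 - t) ^ (c - (i:ℝ))) *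
                (|P (m - i)| * (1 + t) ^ (c - ((m - i : ℕ):ℝ))))
              = ((m.choose i : ℝ) * ((1 - t^2) ^ σ * ((1 - t) ^ (c - (i:ℝ)) * (1 + t) ^ (c - ((m - i : ℕ):ℝ))))) *
                  (|P i| * |P (m - i)|) := by ring
          rw [e5, hrw]
          have h7 : (0:ℝ) ≤ (m.choose i : ℝ) * ((1 - t) ^ (m - i) * (1 + t) ^ i) := by positivity
          calc (m.choose i : ℝ) * ((1 - t) ^ (m - i) * (1 + t) ^ i) * (|P i| * |P (m - i)|)
              ≤ (m.choose i : ℝ) * ((1 - t) ^ (m - i) * (1 + t) ^ i) * ((m:ℝ) + ν) ^ m :=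
                mul_le_mul_of_nonneg_left hPP h7
            _ = (m.choose i : ℝ) * (((m:ℝ) + ν) ^ m * ((1 - t) ^ (m - i) * (1 + t) ^ i)) := by
                ring
  have hsum : ∑ i ∈ Finset.range (m + 1),
      (m.choose i : ℝ) * (((m:ℝ) + ν) ^ m * ((1 - t) ^ (m - i) * (1 + t) ^ i))
      = ((m:ℝ) + ν) ^ m * 2 ^ m := by
    have e : ∀ i ∈ Finset.range (m + 1),
        (m.choose i : ℝ) * (((m:ℝ) + ν) ^ m * ((1 - t) ^ (m - i) * (1 + t) ^ i))
        = ((m:ℝ) + ν) ^ m * ((1 + t) ^ i * (1 - t) ^ (m - i) * (m.choose i : ℝ)) := by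
      intro i _; ring
    rw [Finset.sum_congr rfl e, ← Finset.mul_sum, ← add_pow]
    rw [show (1 + t) + (1 - t) = (2:ℝ) by ring]
  calc (1 - t ^ 2) ^ σ * |iteratedDeriv m (fun s : ℝ => (1 - s ^ 2) ^ c) t|
      ≤ ((m:ℝ) + ν) ^ m * 2 ^ m := by rw [← hsum]; exact hkey
    _ ≤ ((m:ℝ) + ν) ^ m * 4 ^ m := by
        apply mul_le_mul_of_nonneg_left _ (pow_nonneg hmν.le m)
        exact pow_le_pow_left₀ (by norm_num) (by norm_num) m

private lemma geg_core_half (m : ℕ) (t : ℝ) (ht1 : -1 ≤ t) (ht2 : t ≤ 1) :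
    |iteratedDeriv m (fun s : ℝ => (1 - s ^ 2) ^ ((m : ℝ) + 1 / 2 - 1 / 2)) t|
      ≤ ((m : ℝ) + 1 / 2) ^ m * 4 ^ m := by
  have hfun : (fun s : ℝ => (1 - s ^ 2) ^ ((m : ℝ) + 1 / 2 - 1 / 2))
      = fun s : ℝ => (1 - s) ^ m * (1 + s) ^ m := by
    funext s
    rw [show (m:ℝ) + 1/2 - 1/2 = ((m:ℕ):ℝ) by push_cast; ring, Real.rpow_natCast,
      show (1:ℝ) - s^2 = (1-s)*(1+s) by ring, mul_pow]
  rw [hfun]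
  have hf : ContDiff ℝ (⊤ : ℕ∞) (fun s : ℝ => (1 - s) ^ m) := (contDiff_const.sub contDiff_id).pow m
  have hg : ContDiff ℝ (⊤ : ℕ∞) (fun s : ℝ => (1 + s) ^ m) := (contDiff_const.add contDiff_id).pow m
  have hQ : ∀ k : ℕ, k ≤ m → |∏ j ∈ Finset.range k, ((m:ℝ) - j)| ≤ ((m:ℝ) + 1/2) ^ k := by
    intro k hk
    rw [Finset.abs_prod]
    calc ∏ j ∈ Finset.range k, |(m:ℝ) - (j:ℝ)|
        ≤ ∏ _j ∈ Finset.range k, ((m:ℝ) + 1/2) := by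
          apply Finset.prod_le_prod (fun _ _ => abs_nonneg _)
          intro j hj
          have hjk := Finset.mem_range.mp hj
          have hjm : (j:ℝ) ≤ (m:ℝ) := by exact_mod_cast (by omega : j ≤ m)
          rw [abs_of_nonneg (by linarith)]; linarith
      _ = ((m:ℝ) + 1/2) ^ k := by rw [Finset.prod_const, Finset.card_range]
  have hA : ∀ i : ℕ, i ≤ m → ‖iteratedFDeriv ℝ i (fun s : ℝ => (1 - s) ^ m) t‖
      ≤ ((m:ℝ) + 1/2) ^ i * 2 ^ (m - i) := by
    intro i hi
    rw [norm_iteratedFDeriv_eq_norm_iteratedDeriv, Real.norm_eq_abs, iter_oneSub_nat,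
      abs_mul, abs_pow, abs_neg, abs_one, one_pow, one_mul, abs_mul,
      abs_of_nonneg (pow_nonneg (by linarith : (0:ℝ) ≤ 1 - t) _)]
    exact mul_le_mul (hQ i hi) (pow_le_pow_left₀ (by linarith) (by linarith) _)
      (pow_nonneg (by linarith) _) (by positivity)
  have hB : ∀ i : ℕ, i ≤ m → ‖iteratedFDeriv ℝ i (fun s : ℝ => (1 + s) ^ m) t‖
      ≤ ((m:ℝ) + 1/2) ^ i * 2 ^ (m - i) := by
    intro i hi
    rw [norm_iteratedFDeriv_eq_norm_iteratedDeriv, Real.norm_eq_abs, iter_onePlus_nat,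
      abs_mul, abs_of_nonneg (pow_nonneg (by linarith : (0:ℝ) ≤ 1 + t) _)]
    exact mul_le_mul (hQ i hi) (pow_le_pow_left₀ (by linarith) (by linarith) _)
      (pow_nonneg (by linarith) _) (by positivity)
  calc |iteratedDeriv m (fun s : ℝ => (1 - s) ^ m * (1 + s) ^ m) t|
      = ‖iteratedFDeriv ℝ m (fun s : ℝ => (1 - s) ^ m * (1 + s) ^ m) t‖ := by
        rw [norm_iteratedFDeriv_eq_norm_iteratedDeriv, Real.norm_eq_abs]
    _ ≤ ∑ i ∈ Finset.range (m + 1), (m.choose i : ℝ) *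
          ‖iteratedFDeriv ℝ i (fun s : ℝ => (1 - s) ^ m) t‖ *
          ‖iteratedFDeriv ℝ (m - i) (fun s : ℝ => (1 + s) ^ m) t‖ :=
        norm_iteratedFDeriv_mul_le hf hg t (by exact_mod_cast le_top)
    _ ≤ ∑ i ∈ Finset.range (m + 1), (m.choose i : ℝ) * (((m:ℝ) + 1/2) ^ m * 2 ^ m) := by
        apply Finset.sum_le_sum
        intro i hi
        have him : i ≤ m := by have := Finset.mem_range.mp hi; omega
        have h1 := hA i him
        have h2 := hB (m - i) (by omega)
        calc (m.choose i : ℝ) * ‖iteratedFDeriv ℝ i (fun s : ℝ => (1 - s) ^ m) t‖ *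
              ‖iteratedFDeriv ℝ (m - i) (fun s : ℝ => (1 + s) ^ m) t‖
            ≤ (m.choose i : ℝ) * (((m:ℝ) + 1/2) ^ i * 2 ^ (m - i)) *
              (((m:ℝ) + 1/2) ^ (m - i) * 2 ^ (m - (m - i))) := by
              apply mul_le_mul (mul_le_mul_of_nonneg_left h1 (by positivity)) h2
                (norm_nonneg _) (by positivity)
          _ = (m.choose i : ℝ) * ((((m:ℝ) + 1/2) ^ i * ((m:ℝ) + 1/2) ^ (m - i)) *
                (2 ^ (m - i) * 2 ^ (m - (m - i)))) := by ring
          _ = (m.choose i : ℝ) * (((m:ℝ) + 1/2) ^ m * 2 ^ m) := by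
              rw [← pow_add, ← pow_add, show i + (m - i) = m by omega,
                show m - i + (m - (m - i)) = m by omega]
    _ = (∑ i ∈ Finset.range (m + 1), (m.choose i : ℝ)) * (((m:ℝ) + 1/2) ^ m * 2 ^ m) := by
        rw [← Finset.sum_mul]
    _ = (2:ℝ) ^ m * (((m:ℝ) + 1/2) ^ m * 2 ^ m) := by
        rw [← Nat.cast_sum, Nat.sum_range_choose]; push_cast; ring
    _ = ((m:ℝ) + 1/2) ^ m * 4 ^ m := by
        rw [show (4:ℝ) = 2 * 2 by norm_num, mul_pow]; ring

private lemma geg_core (ν : ℝ) (hν : 0 < ν) (m : ℕ) (t : ℝ) (ht : t ∈ Set.Icc (-1:ℝ) 1) :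
    (1 - t ^ 2) ^ (-ν + 1 / 2 : ℝ) *
      |iteratedDeriv m (fun s : ℝ => (1 - s ^ 2) ^ ((m : ℝ) + ν - 1 / 2)) t|
    ≤ ((m : ℝ) + ν) ^ m * 4 ^ m := by
  obtain ⟨ht1, ht2⟩ := ht
  have hmν : (0:ℝ) < (m:ℝ) + ν := by positivity
  by_cases hν2 : ν = 1/2
  · subst hν2
    rw [show (-(1/2:ℝ) + 1/2) = 0 by ring, Real.rpow_zero, one_mul]
    exact geg_core_half m t ht1 ht2
  · rcases eq_or_lt_of_le ht1 with h | h1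
    · rw [show (1 - t^2 : ℝ) = 0 by rw [← h]; ring, Real.zero_rpow (by
        intro hcon; apply hν2; linarith), zero_mul]
      positivity
    · rcases eq_or_lt_of_le ht2 with h | h2
      · rw [show (1 - t^2 : ℝ) = 0 by rw [h]; ring, Real.zero_rpow (by
          intro hcon; apply hν2; linarith), zero_mul]
        positivity
      · exact geg_core_interior ν hν m t h1 h2

private lemma gamma_ratio_le (ν : ℝ) (hν : 0 < ν) (m : ℕ) :
    Real.Gamma (m + ν) * Real.Gamma (m + 2 * ν) /
      (Real.Gamma ν * Real.Gamma (2 * m + 2 * ν))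
      ≤ ((m:ℝ) + ν) ^ m / m.factorial := by
  have hΓν : 0 < Real.Gamma ν := Real.Gamma_pos_of_pos hν
  have hΓ2 : 0 < Real.Gamma ((m:ℝ) + 2 * ν) := Real.Gamma_pos_of_pos (by positivity)
  have e1 : Real.Gamma ((m:ℝ) + ν) = Real.Gamma ν * ∏ j ∈ Finset.range m, (ν + j) := by
    rw [show (m:ℝ) + ν = ν + m by ring]; exact myGamma_add_nat ν hν m
  have e2 : Real.Gamma (2 * (m:ℝ) + 2 * ν)
      = Real.Gamma ((m:ℝ) + 2 * ν) * ∏ j ∈ Finset.range m, ((m:ℝ) + 2 * ν + j) := by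
    rw [show 2 * (m:ℝ) + 2 * ν = ((m:ℝ) + 2 * ν) + m by ring]
    exact myGamma_add_nat _ (by positivity) m
  have hP1 : (0:ℝ) ≤ ∏ j ∈ Finset.range m, (ν + (j:ℝ)) :=
    Finset.prod_nonneg fun j _ => by positivity
  have hP2 : (0:ℝ) < ∏ j ∈ Finset.range m, ((m:ℝ) + 2 * ν + j) :=
    Finset.prod_pos fun j _ => by positivity
  have hfac : (0:ℝ) < m.factorial := by exact_mod_cast m.factorial_pos
  rw [e1, e2]
  have heq : (Real.Gamma ν * ∏ j ∈ Finset.range m, (ν + (j:ℝ))) * Real.Gamma ((m:ℝ) + 2 * ν) /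
      (Real.Gamma ν * (Real.Gamma ((m:ℝ) + 2 * ν) * ∏ j ∈ Finset.range m, ((m:ℝ) + 2 * ν + j)))
      = (∏ j ∈ Finset.range m, (ν + (j:ℝ))) / ∏ j ∈ Finset.range m, ((m:ℝ) + 2 * ν + j) := by
    field_simp
  rw [heq, div_le_div_iff₀ hP2 hfac]
  -- ∏ (ν+j) * m! ≤ (m+ν)^m * ∏ (m+2ν+j)
  have hfacprod : (m.factorial : ℝ) = ∏ j ∈ Finset.range m, ((j:ℝ) + 1) := by
    rw [← Finset.prod_range_add_one_eq_factorial m]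
    push_cast
    rfl
  rw [hfacprod, ← Finset.prod_mul_distrib]
  have hpow : ((m:ℝ) + ν) ^ m * ∏ j ∈ Finset.range m, ((m:ℝ) + 2 * ν + j)
      = ∏ j ∈ Finset.range m, (((m:ℝ) + ν) * ((m:ℝ) + 2 * ν + j)) := by
    rw [Finset.prod_mul_distrib, Finset.prod_const, Finset.card_range]
  rw [hpow]
  apply Finset.prod_le_prod
  · intro j _; positivity
  · intro j hj
    have hjm : (j:ℝ) + 1 ≤ (m:ℝ) := by
      have := Finset.mem_range.mp hj
      exact_mod_cast (by omega : j + 1 ≤ m)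
    have hj0 : (0:ℝ) ≤ j := Nat.cast_nonneg j
    apply mul_le_mul (by linarith) (by linarith) (by linarith) (by positivity)

private lemma gegenbauer_abs_le (ν : ℝ) (hν : 0 < ν) (m : ℕ) (t : ℝ)
    (ht : t ∈ Set.Icc (-1:ℝ) 1) :
    |gegenbauer ν m t| ≤ 2 ^ m / m.factorial * (((m:ℝ) + ν) ^ m / m.factorial) *
      (((m:ℝ) + ν) ^ m * 4 ^ m) := by
  have hfac : (0:ℝ) < m.factorial := by exact_mod_cast m.factorial_pos
  have hR : (0:ℝ) < Real.Gamma (m + ν) * Real.Gamma (m + 2 * ν) /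
      (Real.Gamma ν * Real.Gamma (2 * m + 2 * ν)) := by
    have h1 : (0:ℝ) < Real.Gamma ((m:ℝ) + ν) := Real.Gamma_pos_of_pos (by positivity)
    have h2 : (0:ℝ) < Real.Gamma ((m:ℝ) + 2 * ν) := Real.Gamma_pos_of_pos (by positivity)
    have h3 : (0:ℝ) < Real.Gamma ν := Real.Gamma_pos_of_pos hν
    have h4 : (0:ℝ) < Real.Gamma (2 * (m:ℝ) + 2 * ν) := Real.Gamma_pos_of_pos (by positivity)
    positivity
  have hpre : (0:ℝ) ≤ (1 - t ^ 2) ^ (-ν + 1/2 : ℝ) := by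
    apply Real.rpow_nonneg
    obtain ⟨h1, h2⟩ := ht; nlinarith
  rw [gegenbauer, abs_mul, abs_mul, abs_mul]
  have ha : |(-2 : ℝ) ^ m / (m.factorial : ℝ)| = 2 ^ m / m.factorial := by
    rw [abs_div, abs_pow, abs_neg, abs_two, abs_of_pos hfac]
  rw [ha, abs_of_pos hR, abs_of_nonneg hpre]
  calc 2 ^ m / (m.factorial : ℝ) *
        (Real.Gamma (m + ν) * Real.Gamma (m + 2 * ν) /
          (Real.Gamma ν * Real.Gamma (2 * m + 2 * ν))) *
        (1 - t ^ 2) ^ (-ν + 1/2 : ℝ) *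
        |iteratedDeriv m (fun s : ℝ => (1 - s ^ 2) ^ ((m : ℝ) + ν - 1 / 2)) t|
      = 2 ^ m / (m.factorial : ℝ) *
        (Real.Gamma (m + ν) * Real.Gamma (m + 2 * ν) /
          (Real.Gamma ν * Real.Gamma (2 * m + 2 * ν))) *
        ((1 - t ^ 2) ^ (-ν + 1/2 : ℝ) *
          |iteratedDeriv m (fun s : ℝ => (1 - s ^ 2) ^ ((m : ℝ) + ν - 1 / 2)) t|) := by ring
    _ ≤ 2 ^ m / (m.factorial : ℝ) * (((m:ℝ) + ν) ^ m / m.factorial) *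
        (((m:ℝ) + ν) ^ m * 4 ^ m) := by
      apply mul_le_mul
      · apply mul_le_mul_of_nonneg_left (gamma_ratio_le ν hν m) (by positivity)
      · exact geg_core ν hν m t ht
      · positivity
      · positivity

private lemma gegFactor_abs_le (ν : ℝ) (hν : 0 ≤ ν) : ∃ A K : ℝ, 1 ≤ A ∧ 1 ≤ K ∧
    ∀ (m : ℕ) (φ : ℝ), |gegFactor ν m φ| ≤ A * ((m:ℝ) + 1) * K ^ m := by
  have hE : (1:ℝ) ≤ Real.exp 1 := by
    have := Real.add_one_le_exp (1:ℝ); linarith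
  rcases eq_or_lt_of_le hν with h0 | hν'
  · refine ⟨2, 1, by norm_num, le_refl 1, ?_⟩
    intro m φ
    rw [gegFactor, if_pos h0.symm, one_pow, mul_one]
    have hm : (0:ℝ) ≤ (m:ℝ) := Nat.cast_nonneg m
    split_ifs
    · rw [abs_one]; linarith
    · calc |2 * Real.cos (m * φ)| = 2 * |Real.cos (m * φ)| := by
            rw [abs_mul, abs_two]
        _ ≤ 2 * 1 := by
            apply mul_le_mul_of_nonneg_left (Real.abs_cos_le_one _) (by norm_num)
        _ ≤ 2 * ((m:ℝ) + 1) := by nlinarith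
  · obtain ⟨p, hp⟩ : ∃ p : ℝ, p = 1 + ν := ⟨1 + ν, rfl⟩
    have hp1 : (1:ℝ) ≤ p := by rw [hp]; linarith
    refine ⟨(ν⁻¹ + 1) * Real.exp 1 ^ 2, 8 * p ^ 2 * Real.exp 1 ^ 2, ?_, ?_, ?_⟩
    · have h1 : (0:ℝ) < ν⁻¹ := by positivity
      nlinarith
    · have h2 : (1:ℝ) ≤ p ^ 2 := by nlinarith
      have h3 : (1:ℝ) ≤ Real.exp 1 ^ 2 := by nlinarith
      nlinarith
    · intro m φ
      rw [gegFactor, if_neg hν'.ne']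
      set t := Real.cos φ with htdef
      have ht : t ∈ Set.Icc (-1:ℝ) 1 := ⟨Real.neg_one_le_cos φ, Real.cos_le_one φ⟩
      have hmν : (0:ℝ) < (m:ℝ) + ν := by positivity
      have hfac : (0:ℝ) < m.factorial := by exact_mod_cast m.factorial_pos
      have hm : (0:ℝ) ≤ (m:ℝ) := Nat.cast_nonneg m
      rw [abs_mul, abs_mul, abs_of_pos hmν, abs_of_pos (by positivity : (0:ℝ) < ν⁻¹)]
      set M : ℝ := (m:ℝ)
      have step1 : (M + ν) * ν⁻¹ * |gegenbauer ν m t|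
          ≤ (M + ν) * ν⁻¹ * (2 ^ m / m.factorial * (((M + ν) ^ m / m.factorial)) *
            ((M + ν) ^ m * 4 ^ m)) := by
        apply mul_le_mul_of_nonneg_left (gegenbauer_abs_le ν hν' m t ht) (by positivity)
      refine step1.trans ?_
      have h1 : M + ν ≤ p * (M + 1) := by rw [hp]; nlinarith
      have key : (M + ν) ^ m / (m.factorial : ℝ)
          ≤ p ^ m * (Real.exp 1 * Real.exp 1 ^ m) := by
        calc (M + ν) ^ m / (m.factorial : ℝ)
            ≤ (p * (M + 1)) ^ m / (m.factorial : ℝ) := by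
              gcongr
          _ = p ^ m * ((M + 1) ^ m / (m.factorial : ℝ)) := by
              rw [mul_pow]; ring
          _ ≤ p ^ m * Real.exp (M + 1) := by
              apply mul_le_mul_of_nonneg_left _ (by positivity)
              exact_mod_cast Real.pow_div_factorial_le_exp (x := M + 1) (by positivity) m
          _ = p ^ m * (Real.exp 1 * Real.exp 1 ^ m) := by
              rw [show M + 1 = 1 + (m:ℝ) * 1 by push_cast; ring, Real.exp_add,
                Real.exp_nat_mul]
      have hXF : (0:ℝ) ≤ (M + ν) ^ m / (m.factorial : ℝ) := by positivity
      have h8 : (8:ℝ) ^ m = 2 ^ m * 4 ^ m := by rw [← mul_pow]; norm_num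
      have step2 : (M + ν) * ν⁻¹ * (2 ^ m / m.factorial * (((M + ν) ^ m / m.factorial)) *
            ((M + ν) ^ m * 4 ^ m))
          = ν⁻¹ * (M + ν) * (8 ^ m * ((M + ν) ^ m / (m.factorial : ℝ)) ^ 2) := by
        rw [h8]; field_simp
      rw [step2]
      calc ν⁻¹ * (M + ν) * (8 ^ m * ((M + ν) ^ m / (m.factorial : ℝ)) ^ 2)
          ≤ ν⁻¹ * (p * (M + 1)) * (8 ^ m * (p ^ m * (Real.exp 1 * Real.exp 1 ^ m)) ^ 2) := by
            apply mul_le_mul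
            · apply mul_le_mul_of_nonneg_left h1 (by positivity)
            · apply mul_le_mul_of_nonneg_left _ (by positivity)
              exact pow_le_pow_left₀ hXF key 2
            · positivity
            · positivity
        _ = (ν⁻¹ * p * Real.exp 1 ^ 2) * (M + 1) * (8 * p ^ 2 * Real.exp 1 ^ 2) ^ m := by
            ring
        _ = (ν⁻¹ + 1) * Real.exp 1 ^ 2 * (M + 1) * (8 * p ^ 2 * Real.exp 1 ^ 2) ^ m := by
            rw [show ν⁻¹ * p = ν⁻¹ + 1 by rw [hp]; field_simp]

private lemma gamma_lb (x q : ℝ) (hx : 1 < x) (hq : 0 < q) :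
    Real.Gamma x * (x - 1) ^ q ≤ Real.Gamma (x + q) := by
  have h0 : (0:ℝ) < x - 1 := by linarith
  have hΓx : 0 < Real.Gamma x := Real.Gamma_pos_of_pos (by linarith)
  have hΓxq : 0 < Real.Gamma (x + q) := Real.Gamma_pos_of_pos (by linarith)
  have hΓx1 : 0 < Real.Gamma (x - 1) := Real.Gamma_pos_of_pos h0
  have hslope := Real.convexOn_log_Gamma.slope_mono_adjacent
    (Set.mem_Ioi.mpr h0) (Set.mem_Ioi.mpr (by linarith : (0:ℝ) < x + q))
    (by linarith : x - 1 < x) (by linarith : x < x + q)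
  simp only [Function.comp_apply] at hslope
  have hG : Real.Gamma x = (x - 1) * Real.Gamma (x - 1) := by
    have h := Real.Gamma_add_one (s := x - 1) h0.ne'
    rw [show x - 1 + 1 = x by ring] at h
    exact h
  have hlog : Real.log (Real.Gamma x) - Real.log (Real.Gamma (x - 1)) = Real.log (x - 1) := by
    rw [hG, Real.log_mul h0.ne' hΓx1.ne']; ring
  rw [show x - (x - 1) = (1:ℝ) by ring, show x + q - x = q by ring, div_one, hlog] at hslope
  have hkey : q * Real.log (x - 1) + Real.log (Real.Gamma x)
      ≤ Real.log (Real.Gamma (x + q)) := by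
    have := (le_div_iff₀ hq).mp hslope
    linarith
  calc Real.Gamma x * (x - 1) ^ q
      = Real.exp (Real.log (Real.Gamma x) + Real.log (x - 1) * q) := by
        rw [Real.exp_add, Real.exp_log hΓx, ← Real.rpow_def_of_pos h0]
    _ ≤ Real.exp (Real.log (Real.Gamma (x + q))) := by
        apply Real.exp_le_exp.mpr; linarith
    _ = Real.Gamma (x + q) := Real.exp_log hΓxq

private lemma summable_T (b ν : ℝ) (hb : 0 < b) (hν : 0 ≤ ν) (Q : ℝ) (hQ : 0 < Q) :
    Summable (fun m : ℕ => ((m:ℝ) + 1) * Q ^ m / Real.Gamma (b * m + (b * ν + 1))) := by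
  have hd : ∀ m : ℕ, (0:ℝ) < b * m + (b * ν + 1) := by
    intro m
    have h1 : (0:ℝ) ≤ b * m := by positivity
    have h2 : (0:ℝ) ≤ b * ν := by positivity
    linarith
  have hpos : ∀ m : ℕ, (0:ℝ) < ((m:ℝ) + 1) * Q ^ m / Real.Gamma (b * m + (b * ν + 1)) := by
    intro m
    have := Real.Gamma_pos_of_pos (hd m)
    positivity
  apply summable_of_ratio_norm_eventually_le (r := 1/2) (by norm_num)
  have htend : Tendsto (fun m : ℕ => (b * m) ^ b) atTop atTop :=
    (tendsto_rpow_atTop hb).comp ((tendsto_natCast_atTop_atTop (R := ℝ)).const_mul_atTop hb)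
  filter_upwards [htend.eventually_ge_atTop (4 * Q), eventually_ge_atTop 1] with m h4Q hm1
  have hm1' : (1:ℝ) ≤ (m:ℝ) := by exact_mod_cast hm1
  have hΓx : 0 < Real.Gamma (b * m + (b * ν + 1)) := Real.Gamma_pos_of_pos (hd m)
  have hx1 : 1 < b * m + (b * ν + 1) := by
    have h2 : (0:ℝ) ≤ b * ν := by positivity
    have h3 : b * 1 ≤ b * m := by nlinarith
    nlinarith
  have hΓxb : 0 < Real.Gamma (b * m + (b * ν + 1) + b) := Real.Gamma_pos_of_pos (by linarith)
  have hgam : Real.Gamma (b * m + (b * ν + 1)) * (4 * Q)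
      ≤ Real.Gamma (b * m + (b * ν + 1) + b) := by
    have hbm : (0:ℝ) ≤ b * m := by positivity
    have h1 : (b * m : ℝ) ^ b ≤ (b * m + (b * ν + 1) - 1) ^ b := by
      apply Real.rpow_le_rpow hbm _ hb.le
      have : (0:ℝ) ≤ b * ν := by positivity
      linarith
    calc Real.Gamma (b * m + (b * ν + 1)) * (4 * Q)
        ≤ Real.Gamma (b * m + (b * ν + 1)) * ((b * m) ^ b) :=
          mul_le_mul_of_nonneg_left h4Q hΓx.le
      _ ≤ Real.Gamma (b * m + (b * ν + 1)) * ((b * m + (b * ν + 1) - 1) ^ b) :=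
          mul_le_mul_of_nonneg_left h1 hΓx.le
      _ ≤ Real.Gamma (b * m + (b * ν + 1) + b) := gamma_lb _ b hx1 hb
  rw [Real.norm_eq_abs, Real.norm_eq_abs, abs_of_pos (hpos (m+1)), abs_of_pos (hpos m)]
  have harg' : b * ((m + 1 : ℕ) : ℝ) + (b * ν + 1) = b * m + (b * ν + 1) + b := by
    push_cast; ring
  rw [harg']
  rw [div_le_iff₀ hΓxb]
  push_cast
  calc ((m:ℝ) + 1 + 1) * Q ^ (m + 1)
      = ((m:ℝ) + 1 + 1) * (Q ^ m * Q) := by ring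
    _ ≤ (2 * ((m:ℝ) + 1)) * (Q ^ m * Q) := by
        apply mul_le_mul_of_nonneg_right (by linarith) (by positivity)
    _ = 1 / 2 * (((m:ℝ) + 1) * Q ^ m / Real.Gamma (b * m + (b * ν + 1))) *
          (Real.Gamma (b * m + (b * ν + 1)) * (4 * Q)) := by
        field_simp
        ring
    _ ≤ 1 / 2 * (((m:ℝ) + 1) * Q ^ m / Real.Gamma (b * m + (b * ν + 1))) *
          Real.Gamma (b * m + (b * ν + 1) + b) := by
        apply mul_le_mul_of_nonneg_left hgam (by positivity)

/-- Absolute convergence and uniform boundedness of `𝓘(b,ν;−iy;cos φ)` on `|y| ≤ R₀`,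
`φ ∈ [0,π]`. -/
theorem scrI_summable_and_bounded (b ν R₀ : ℝ) (hb : 0 < b) (hν : 0 ≤ ν) (hR : 0 < R₀) :
    (∀ y φ : ℝ, |y| ≤ R₀ → φ ∈ Set.Icc 0 Real.pi →
      Summable fun m : ℕ => ‖scrITerm b ν y φ m‖) ∧
    ∃ C : ℝ, 0 < C ∧ ∀ y φ : ℝ, |y| ≤ R₀ → φ ∈ Set.Icc 0 Real.pi →
      ‖scrI b ν y φ‖ ≤ C := by
  obtain ⟨A, K, hA, hK, hgeg⟩ := gegFactor_abs_le ν hν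
  have hA0 : (0:ℝ) < A := lt_of_lt_of_le zero_lt_one hA
  have hK0 : (0:ℝ) < K := lt_of_lt_of_le zero_lt_one hK
  have hQpos : (0:ℝ) < (R₀ / 2) ^ (b:ℝ) * K := by
    have h := Real.rpow_pos_of_pos (by positivity : (0:ℝ) < R₀ / 2) b
    positivity
  have hΓd : ∀ m : ℕ, (0:ℝ) < Real.Gamma (b * m + (b * ν + 1)) := by
    intro m
    apply Real.Gamma_pos_of_pos
    have h1 : (0:ℝ) ≤ b * m := by positivity
    have h2 : (0:ℝ) ≤ b * ν := by positivity
    linarith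
  set T : ℕ → ℝ := fun m => (A * Real.exp (R₀ ^ 2 / 4)) *
    (((m:ℝ) + 1) * ((R₀ / 2) ^ (b:ℝ) * K) ^ m / Real.Gamma (b * m + (b * ν + 1))) with hT
  have hTsum : Summable T := (summable_T b ν hb hν _ hQpos).mul_left _
  have hTnonneg : ∀ m, 0 ≤ T m := by
    intro m
    have := hΓd m
    have h := Real.rpow_pos_of_pos (by positivity : (0:ℝ) < R₀ / 2) b
    positivity
  have hbound : ∀ (y φ : ℝ), |y| ≤ R₀ → ∀ m : ℕ, ‖scrITerm b ν y φ m‖ ≤ T m := by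
    intro y φ hy m
    have habsy : (0:ℝ) ≤ |y| := abs_nonneg y
    have habs1 : ‖(-Complex.I * (y:ℂ) / 2)‖ = |y| / 2 := by
      simp [map_div₀, map_mul]
    have h1 : ‖((-Complex.I * (y:ℂ)) / 2) ^ (((b * (m:ℕ) : ℝ)) : ℂ)‖
        ≤ ((R₀ / 2) ^ (b:ℝ)) ^ m := by
      refine (Complex.norm_cpow_le _ _).trans ?_
      rw [Complex.ofReal_im, mul_zero, Real.exp_zero, div_one, Complex.ofReal_re, habs1]
      calc (|y| / 2) ^ (b * (m:ℕ) : ℝ) ≤ (R₀ / 2) ^ (b * (m:ℕ) : ℝ) := by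
            apply Real.rpow_le_rpow (by positivity) (by linarith) (by positivity)
        _ = ((R₀ / 2) ^ (b:ℝ)) ^ m := by
            rw [Real.rpow_mul (by positivity), Real.rpow_natCast]
    have h2 : ‖normBesselI (b * ((m:ℕ) + ν)) (-Complex.I * y)‖
        ≤ Real.exp (R₀ ^ 2 / 4) / Real.Gamma (b * m + (b * ν + 1)) := by
      have hl : (0:ℝ) ≤ b * ((m:ℕ) + ν) := by positivity
      refine (normBesselI_norm_le _ hl _).trans ?_
      have hw : ‖-Complex.I * (y:ℂ)‖ = |y| := by simp
      rw [hw, show b * ((m:ℕ) + ν) + 1 = b * m + (b * ν + 1) by ring]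
      have hnum : Real.exp (|y| ^ 2 / 4) ≤ Real.exp (R₀ ^ 2 / 4) := by
        apply Real.exp_le_exp.mpr
        have : |y| ^ 2 ≤ R₀ ^ 2 := pow_le_pow_left₀ habsy hy 2
        linarith
      exact (div_le_div_iff_of_pos_right (hΓd m)).mpr hnum
    have h3 : ‖((gegFactor ν m φ : ℝ) : ℂ)‖ ≤ A * ((m:ℝ) + 1) * K ^ m := by
      rw [Complex.norm_real, Real.norm_eq_abs]
      exact hgeg m φ
    calc ‖scrITerm b ν y φ m‖
        = ‖((-Complex.I * (y:ℂ)) / 2) ^ (((b * (m:ℕ) : ℝ)) : ℂ)‖ *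
          ‖normBesselI (b * ((m:ℕ) + ν)) (-Complex.I * y)‖ *
          ‖((gegFactor ν m φ : ℝ) : ℂ)‖ := by
          rw [scrITerm, norm_mul, norm_mul]
      _ ≤ ((R₀ / 2) ^ (b:ℝ)) ^ m *
          (Real.exp (R₀ ^ 2 / 4) / Real.Gamma (b * m + (b * ν + 1))) *
          (A * ((m:ℝ) + 1) * K ^ m) := by
          apply mul_le_mul (mul_le_mul h1 h2 (norm_nonneg _) (by positivity)) h3
            (norm_nonneg _) (by positivity)
      _ = T m := by
          rw [hT]
          field_simp
          ring
  refine ⟨fun y φ hy _ => Summable.of_nonneg_of_le (fun m => norm_nonneg _)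
    (hbound y φ hy) hTsum, ?_⟩
  have hΓν : 0 < Real.Gamma (b * ν + 1) := by
    apply Real.Gamma_pos_of_pos
    have : (0:ℝ) ≤ b * ν := by positivity
    linarith
  have hts : 0 ≤ ∑' m, T m := tsum_nonneg hTnonneg
  refine ⟨Real.Gamma (b * ν + 1) * (∑' m, T m) + 1, ?_, ?_⟩
  · have := mul_nonneg hΓν.le hts
    linarith
  · intro y φ hy hφ
    have hsnorm : Summable (fun m : ℕ => ‖scrITerm b ν y φ m‖) :=
      Summable.of_nonneg_of_le (fun m => norm_nonneg _) (hbound y φ hy) hTsum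
    calc ‖scrI b ν y φ‖
        = Real.Gamma (b * ν + 1) * ‖∑' m : ℕ, scrITerm b ν y φ m‖ := by
          rw [scrI, norm_mul, Complex.norm_real, Real.norm_eq_abs, abs_of_pos hΓν]
      _ ≤ Real.Gamma (b * ν + 1) * ∑' m : ℕ, ‖scrITerm b ν y φ m‖ :=
          mul_le_mul_of_nonneg_left (norm_tsum_le_tsum_norm hsnorm) hΓν.le
      _ ≤ Real.Gamma (b * ν + 1) * ∑' m : ℕ, T m :=
          mul_le_mul_of_nonneg_left (Summable.tsum_le_tsum (hbound y φ hy) hsnorm hTsum) hΓν.le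
      _ ≤ Real.Gamma (b * ν + 1) * (∑' m, T m) + 1 := by linarith

end ScrIProof
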